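/- Let ν > 0 and let Z be a real random variable with Laplace density (ν/2)e^{−ν|z|}. Then for every x ∈ ℝ, E[|x + Z|] = |x| + (1/ν)e^{−ν|x|}. Consequently, for any s > 0, the supremum over all probability distributions of a real random variable X with E[|X|] ≤ s of E[|X + Z|] (with Z independent of X) equals s + 1/ν, and it is approached by the distributions (1−p)δ₀ + pδ_{s/p} as p → 0. -/

import Mathlib

open MeasureTheory Real Set
open Filter

noncomputable section

/-- `E[|x + Z|]` for `Z` Laplace-distributed with parameter `ν`. -/
def lapAbsMoment (ν x : ℝ) : ℝ := ∫ z : ℝ, (ν / 2) * Real.exp (-(ν * |z|)) * |x + z|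

lemma lapDeriv (b c d : ℝ) (z : ℝ) :
    HasDerivAt (fun z => c * Real.exp (b * z) * (z + d))
      (c * Real.exp (b * z) * (b * (z + d) + 1)) z := by
  have h1 : HasDerivAt (fun z : ℝ => Real.exp (b * z)) (Real.exp (b * z) * b) z := by
    simpa using (((hasDerivAt_id z).const_mul b).exp)
  have h2 : HasDerivAt (fun z : ℝ => z + d) 1 z := (hasDerivAt_id z).add_const d
  have h := (h1.mul h2).const_mul c
  refine (h.congr_deriv (by ring)).congr_of_eventuallyEq ?_
  filter_upwards with y; simp only [Pi.mul_apply]; ring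

lemma lapTendstoTop (ν c d : ℝ) (hν : 0 < ν) :
    Tendsto (fun z => c * Real.exp (-ν * z) * (z + d)) atTop (nhds 0) := by
  have h1 := tendsto_rpow_mul_exp_neg_mul_atTop_nhds_zero 1 ν hν
  have h0 := tendsto_rpow_mul_exp_neg_mul_atTop_nhds_zero 0 ν hν
  simp only [Real.rpow_one, Real.rpow_zero, one_mul] at h1 h0
  have := ((h1.const_mul c).add ((h0.const_mul (c * d))))
  simp only [mul_zero, add_zero] at this
  refine this.congr' ?_
  filter_upwards with z
  ring

lemma lapTendstoBot (ν c d : ℝ) (hν : 0 < ν) :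
    Tendsto (fun z => c * Real.exp (ν * z) * (z + d)) atBot (nhds 0) := by
  have h := (lapTendstoTop ν (-c) (-d) hν).comp tendsto_neg_atBot_atTop
  refine h.congr' ?_
  filter_upwards with z
  simp only [Function.comp]
  ring_nf

lemma lapAbsMoment_formula (ν : ℝ) (hν : 0 < ν) (x : ℝ) (hx : 0 ≤ x) :
    (∫ z : ℝ, (ν / 2) * Real.exp (-(ν * |z|)) * |x + z|)
      = x + (1 / ν) * Real.exp (-(ν * x)) := by
  set g : ℝ → ℝ := fun z => (ν / 2) * Real.exp (-(ν * |z|)) * |x + z| with hg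
  have hgc : Continuous g := by
    apply Continuous.mul
    · exact continuous_const.mul ((continuous_const.mul continuous_abs).neg.rexp)
    · exact (continuous_const.add continuous_id).abs
  -- Piece 3 : Ioi 0
  have hd3 : ∀ z ∈ Ici (0:ℝ), HasDerivAt (fun z => (-(1/2)) * Real.exp (-ν * z) * (z + (x + 1/ν)))
      ((ν/2) * Real.exp (-ν * z) * (x + z)) z := by
    intro z _
    have h := lapDeriv (-ν) (-(1/2)) (x + 1/ν) z
    convert h using 1
    field_simp
    ring
  have hpos3 : ∀ z ∈ Ioi (0:ℝ), 0 ≤ (ν/2) * Real.exp (-ν * z) * (x + z) := by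
    intro z hz
    have : (0:ℝ) < z := hz
    positivity
  have ht3 := lapTendstoTop ν (-(1/2)) (x + 1/ν) hν
  have hval3 := integral_Ioi_of_hasDerivAt_of_nonneg' hd3 hpos3 ht3
  have hint3 : IntegrableOn (fun z => (ν/2) * Real.exp (-ν * z) * (x + z)) (Ioi 0) :=
    integrableOn_Ioi_deriv_of_nonneg' hd3 hpos3 ht3
  have he3 : EqOn (fun z => (ν/2) * Real.exp (-ν * z) * (x + z)) g (Ioi 0) := by
    intro z hz
    have hz' : (0:ℝ) < z := hz
    simp only [hg, abs_of_pos hz', abs_of_nonneg (by linarith : (0:ℝ) ≤ x + z)]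
    ring_nf
  have hint3' : IntegrableOn g (Ioi 0) := hint3.congr_fun he3 measurableSet_Ioi
  have hI3 : ∫ z in Ioi (0:ℝ), g z = x/2 + 1/(2*ν) := by
    rw [← setIntegral_congr_fun measurableSet_Ioi he3, hval3]
    simp only [mul_zero, neg_zero, Real.exp_zero]
    field_simp
    ring
  -- Piece 1 : Iic (-x), via reflection to Ioi x
  have hd1 : ∀ u ∈ Ici x, HasDerivAt (fun u => (-(1/2)) * Real.exp (-ν * u) * (u + (1/ν - x)))
      ((ν/2) * Real.exp (-ν * u) * (u - x)) u := by
    intro u _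
    have h := lapDeriv (-ν) (-(1/2)) (1/ν - x) u
    convert h using 1
    field_simp
    ring
  have hpos1 : ∀ u ∈ Ioi x, 0 ≤ (ν/2) * Real.exp (-ν * u) * (u - x) := by
    intro u hu
    have : x < u := hu
    have : (0:ℝ) ≤ u - x := by linarith
    positivity
  have ht1 := lapTendstoTop ν (-(1/2)) (1/ν - x) hν
  have hval1 := integral_Ioi_of_hasDerivAt_of_nonneg' hd1 hpos1 ht1
  have hint1 : IntegrableOn (fun u => (ν/2) * Real.exp (-ν * u) * (u - x)) (Ioi x) :=
    integrableOn_Ioi_deriv_of_nonneg' hd1 hpos1 ht1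
  have he1 : EqOn (fun u => (ν/2) * Real.exp (-ν * u) * (u - x)) (fun u => g (-u)) (Ioi x) := by
    intro u hu
    have hu' : x < u := hu
    have hu0 : (0:ℝ) < u := lt_of_le_of_lt hx hu'
    simp only [hg, abs_neg, abs_of_pos hu0]
    rw [show x + -u = -(u - x) by ring, abs_neg, abs_of_nonneg (by linarith : (0:ℝ) ≤ u - x)]
    ring_nf
  have hint1' : IntegrableOn (fun u => g (-u)) (Ioi x) := hint1.congr_fun he1 measurableSet_Ioi
  have hrefl : ∫ z in Iic (-x), g z = ∫ u in Ioi x, g (-u) := by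
    rw [← neg_neg x, ← integral_comp_neg_Iic]
    simp only [neg_neg]
  have hI1 : ∫ z in Iic (-x), g z = Real.exp (-(ν*x)) / (2*ν) := by
    rw [hrefl, ← setIntegral_congr_fun measurableSet_Ioi he1, hval1]
    simp only [zero_sub]
    field_simp
    ring_nf
  have hintIic : IntegrableOn g (Iic (-x)) := by
    have m : MeasurableEmbedding (fun z : ℝ => -z) := (Homeomorph.neg ℝ).measurableEmbedding
    rw [← Measure.map_neg_eq_self (volume : Measure ℝ), m.integrableOn_map_iff]
    have hpre : ((fun z : ℝ => -z) ⁻¹' Iic (-x)) = Ici x := by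
      ext u; simp only [mem_preimage, mem_Iic, mem_Ici]; constructor <;> intro h <;> linarith
    rw [hpre]
    exact (integrableOn_Ici_iff_integrableOn_Ioi (f := fun u => g (-u))).mpr hint1'
  -- Piece 2 : Ioc (-x) 0
  have hdK : ∀ z ∈ uIcc (-x) 0, HasDerivAt (fun z => (1/2) * Real.exp (ν * z) * (z + (x - 1/ν)))
      ((ν/2) * Real.exp (ν * z) * (x + z)) z := by
    intro z _
    have h := lapDeriv ν (1/2) (x - 1/ν) z
    convert h using 1
    field_simp
    ring
  have hK2 : IntervalIntegrable (fun z => (ν/2) * Real.exp (ν * z) * (x + z)) volume (-x) 0 := by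
    apply Continuous.intervalIntegrable
    exact (continuous_const.mul ((continuous_const.mul continuous_id).rexp)).mul
      (continuous_const.add continuous_id)
  have hIval2 := intervalIntegral.integral_eq_sub_of_hasDerivAt hdK hK2
  have he2 : EqOn (fun z => (ν/2) * Real.exp (ν * z) * (x + z)) g (Ioc (-x) 0) := by
    intro z hz
    obtain ⟨hz1, hz2⟩ := hz
    simp only [hg, abs_of_nonpos hz2, abs_of_nonneg (by linarith : (0:ℝ) ≤ x + z)]
    ring_nf
  have hint2 : IntegrableOn (fun z => (ν/2) * Real.exp (ν * z) * (x + z)) (Ioc (-x) 0) := by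
    rw [← intervalIntegrable_iff_integrableOn_Ioc_of_le (by linarith : -x ≤ (0:ℝ))]
    exact hK2
  have hint2' : IntegrableOn g (Ioc (-x) 0) := hint2.congr_fun he2 measurableSet_Ioc
  have hI2 : ∫ z in Ioc (-x) 0, g z
      = x/2 - 1/(2*ν) + Real.exp (-(ν*x)) / (2*ν) := by
    rw [← setIntegral_congr_fun measurableSet_Ioc he2,
      ← intervalIntegral.integral_of_le (by linarith : -x ≤ (0:ℝ)), hIval2]
    simp only [mul_zero, Real.exp_zero]
    rw [show ν * -x = -(ν * x) by ring]
    field_simp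
    ring
  -- assembling
  have hunion : Ioc (-x) 0 ∪ Ioi (0:ℝ) = Ioi (-x) := Ioc_union_Ioi_eq_Ioi (by linarith)
  have hintIoi : IntegrableOn g (Ioi (-x)) := by
    rw [← hunion]; exact hint2'.union hint3'
  have hsplit2 : ∫ z in Ioi (-x), g z = (∫ z in Ioc (-x) 0, g z) + ∫ z in Ioi (0:ℝ), g z := by
    rw [← hunion, setIntegral_union Ioc_disjoint_Ioi_same measurableSet_Ioi hint2' hint3']
  have htotal : ∫ z : ℝ, g z = (∫ z in Iic (-x), g z) + ∫ z in Ioi (-x), g z :=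
    (intervalIntegral.integral_Iic_add_Ioi hintIic hintIoi).symm
  rw [htotal, hsplit2, hI1, hI2, hI3]
  field_simp
  ring

lemma lapAbsMoment_neg (ν x : ℝ) : lapAbsMoment ν (-x) = lapAbsMoment ν x := by
  unfold lapAbsMoment
  rw [← integral_neg_eq_self (fun z => (ν / 2) * Real.exp (-(ν * |z|)) * |x + z|) volume]
  congr 1
  funext z
  rw [abs_neg, show x + -z = -(-x + z) by ring, abs_neg]

lemma lapAbsMoment_eq (ν : ℝ) (hν : 0 < ν) (x : ℝ) :
    lapAbsMoment ν x = |x| + (1 / ν) * Real.exp (-(ν * |x|)) := by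
  rcases le_or_gt 0 x with hx | hx
  · rw [abs_of_nonneg hx]
    exact lapAbsMoment_formula ν hν x hx
  · rw [abs_of_neg hx, ← lapAbsMoment_neg]
    exact lapAbsMoment_formula ν hν (-x) (by linarith)

lemma integrable_dirac_cont {f : ℝ → ℝ} (hf : Continuous f) (a : ℝ) :
    Integrable f (MeasureTheory.Measure.dirac a) := by
  refine ⟨hf.aestronglyMeasurable, ?_⟩
  rw [HasFiniteIntegral, lintegral_dirac]
  exact ENNReal.coe_lt_top

/-- For Laplace noise `Z` with parameter `ν`: `E[|x + Z|] = |x| + (1/ν)e^{-ν|x|}` for every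
`x`; consequently the supremum of `E[|X + Z|]` over distributions of `X` (independent of `Z`)
with `E[|X|] ≤ s` equals `s + 1/ν`, approached by the mixtures `(1-p)δ₀ + pδ_{s/p}`
as `p → 0⁺`. -/
theorem laplace_abs_moment_and_sup
    (ν s : ℝ) (hν : 0 < ν) (hs : 0 < s) :
    (∀ x : ℝ, lapAbsMoment ν x = |x| + (1 / ν) * Real.exp (-(ν * |x|))) ∧
    sSup { t : ℝ | ∃ μ : Measure ℝ, IsProbabilityMeasure μ ∧
        (∫ x : ℝ, |x| ∂μ) ≤ s ∧ t = ∫ x : ℝ, lapAbsMoment ν x ∂μ } = s + 1 / ν ∧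
    Filter.Tendsto
      (fun p : ℝ =>
        ∫ x : ℝ, lapAbsMoment ν x ∂(ENNReal.ofReal (1 - p) • MeasureTheory.Measure.dirac 0 +
          ENNReal.ofReal p • MeasureTheory.Measure.dirac (s / p)))
      (nhdsWithin 0 (Set.Ioi 0)) (nhds (s + 1 / ν)) := by
  have h1 : ∀ x : ℝ, lapAbsMoment ν x = |x| + (1 / ν) * Real.exp (-(ν * |x|)) :=
    lapAbsMoment_eq ν hν
  set G : ℝ → ℝ := fun x => |x| + (1 / ν) * Real.exp (-(ν * |x|)) with hG
  set H : ℝ → ℝ := fun x => (1 / ν) * Real.exp (-(ν * |x|)) with hH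
  have hHc : Continuous H := continuous_const.mul ((continuous_const.mul continuous_abs).neg.rexp)
  have hGc : Continuous G := continuous_abs.add hHc
  have hHbd : ∀ x, ‖H x‖ ≤ 1 / ν := by
    intro x
    have h2 : Real.exp (-(ν * |x|)) ≤ 1 := by
      rw [Real.exp_le_one_iff]
      have : 0 ≤ ν * |x| := by positivity
      linarith
    have h3 : 0 < Real.exp (-(ν * |x|)) := Real.exp_pos _
    have hHx : H x = 1 / ν * Real.exp (-(ν * |x|)) := rfl
    rw [Real.norm_eq_abs, hHx, abs_of_nonneg (by positivity)]
    rw [div_mul_eq_mul_div, one_mul, div_le_div_iff₀ hν hν]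
    nlinarith
  set S : Set ℝ := { t : ℝ | ∃ μ : Measure ℝ, IsProbabilityMeasure μ ∧
      (∫ x : ℝ, |x| ∂μ) ≤ s ∧ t = ∫ x : ℝ, lapAbsMoment ν x ∂μ } with hS
  -- upper bound
  have hub : ∀ t ∈ S, t ≤ s + 1 / ν := by
    rintro t ⟨μ, hprob, hμs, rfl⟩
    have hGint : (∫ x : ℝ, lapAbsMoment ν x ∂μ) = ∫ x : ℝ, G x ∂μ := by simp only [h1]; rfl
    rw [hGint]
    have hHint : Integrable H μ :=
      (integrable_const (1 / ν)).mono' hHc.aestronglyMeasurable (Filter.Eventually.of_forall hHbd)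
    by_cases hI : Integrable (fun x : ℝ => |x|) μ
    · have hsplit : (∫ x : ℝ, G x ∂μ) = (∫ x : ℝ, |x| ∂μ) + ∫ x : ℝ, H x ∂μ :=
        integral_add hI hHint
      have hHle : (∫ x : ℝ, H x ∂μ) ≤ 1 / ν := by
        calc (∫ x : ℝ, H x ∂μ) ≤ ∫ _ : ℝ, (1 / ν) ∂μ := by
              refine integral_mono hHint (integrable_const _) (fun x => ?_)
              have := hHbd x
              rw [Real.norm_eq_abs] at this
              exact (le_abs_self _).trans this
          _ = 1 / ν := by simp [measure_univ]
      rw [hsplit]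
      linarith
    · have hnG : ¬ Integrable G μ := by
        intro hGI
        apply hI
        have := hGI.sub hHint
        refine this.congr (Filter.Eventually.of_forall fun x => ?_)
        simp [hG, hH]
      rw [integral_undef hnG]
      positivity
  have hne : S.Nonempty := by
    refine ⟨∫ x : ℝ, lapAbsMoment ν x ∂(MeasureTheory.Measure.dirac 0),
      MeasureTheory.Measure.dirac 0, inferInstance, ?_, rfl⟩
    rw [integral_dirac]
    simp [hs.le]
  -- limit measures
  have hμprob : ∀ p ∈ Ioo (0:ℝ) 1, IsProbabilityMeasure
      (ENNReal.ofReal (1 - p) • MeasureTheory.Measure.dirac (0:ℝ) +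
        ENNReal.ofReal p • MeasureTheory.Measure.dirac (s / p)) := by
    rintro p ⟨hp0, hp1⟩
    constructor
    simp only [Measure.add_apply, Measure.smul_apply, smul_eq_mul, measure_univ, mul_one]
    rw [← ENNReal.ofReal_add (by linarith) hp0.le]
    norm_num
  have hcomp : ∀ (f : ℝ → ℝ), Continuous f → ∀ p ∈ Ioo (0:ℝ) 1,
      (∫ x : ℝ, f x ∂(ENNReal.ofReal (1 - p) • MeasureTheory.Measure.dirac (0:ℝ) +
        ENNReal.ofReal p • MeasureTheory.Measure.dirac (s / p)))
      = (1 - p) * f 0 + p * f (s / p) := by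
    rintro f hf p ⟨hp0, hp1⟩
    have i1 : Integrable f (ENNReal.ofReal (1 - p) • MeasureTheory.Measure.dirac (0:ℝ)) :=
      (integrable_dirac_cont hf 0).smul_measure ENNReal.ofReal_ne_top
    have i2 : Integrable f (ENNReal.ofReal p • MeasureTheory.Measure.dirac (s / p)) :=
      (integrable_dirac_cont hf (s / p)).smul_measure ENNReal.ofReal_ne_top
    rw [integral_add_measure i1 i2, integral_smul_measure, integral_smul_measure,
      integral_dirac, integral_dirac, ENNReal.toReal_ofReal (by linarith),
      ENNReal.toReal_ofReal hp0.le, smul_eq_mul, smul_eq_mul]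
  -- part 3 : the tendsto statement
  have hFeq : ∀ p ∈ Ioo (0:ℝ) 1,
      (∫ x : ℝ, lapAbsMoment ν x ∂(ENNReal.ofReal (1 - p) • MeasureTheory.Measure.dirac (0:ℝ) +
        ENNReal.ofReal p • MeasureTheory.Measure.dirac (s / p)))
      = (1 - p) * (1 / ν) + (s + p * (1 / ν) * Real.exp (-(ν * (s / p)))) := by
    intro p hp
    have : (∫ x : ℝ, lapAbsMoment ν x ∂(ENNReal.ofReal (1 - p) • MeasureTheory.Measure.dirac (0:ℝ) +
        ENNReal.ofReal p • MeasureTheory.Measure.dirac (s / p)))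
        = ∫ x : ℝ, G x ∂(ENNReal.ofReal (1 - p) • MeasureTheory.Measure.dirac (0:ℝ) +
        ENNReal.ofReal p • MeasureTheory.Measure.dirac (s / p)) := by simp only [h1]; rfl
    rw [this, hcomp G hGc p hp]
    have hsp : 0 ≤ s / p := div_nonneg hs.le hp.1.le
    simp only [hG, abs_zero, mul_zero, neg_zero, Real.exp_zero, mul_one, zero_add,
      abs_of_nonneg hsp]
    have hps : p * (s / p) = s := by field_simp [hp.1.ne']
    rw [mul_add, hps]
    ring
  have hmemIoo : Ioo (0:ℝ) 1 ∈ nhdsWithin (0:ℝ) (Set.Ioi 0) :=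
    Ioo_mem_nhdsGT_of_mem (by norm_num : (0:ℝ) ∈ Ico (0:ℝ) 1)
  have t1 : Filter.Tendsto (fun p : ℝ => (1 - p) * (1 / ν))
      (nhdsWithin 0 (Set.Ioi 0)) (nhds (1 / ν)) := by
    have : Filter.Tendsto (fun p : ℝ => (1 - p) * (1 / ν)) (nhds 0) (nhds ((1 - 0) * (1 / ν))) :=
      (((continuous_const.sub continuous_id).mul continuous_const).tendsto 0)
    simpa using this.mono_left nhdsWithin_le_nhds
  have t3 : Filter.Tendsto (fun p : ℝ => p * (1 / ν))
      (nhdsWithin 0 (Set.Ioi 0)) (nhds 0) := by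
    have : Filter.Tendsto (fun p : ℝ => p * (1 / ν)) (nhds 0) (nhds (0 * (1 / ν))) :=
      ((continuous_id.mul continuous_const).tendsto 0)
    simpa using this.mono_left nhdsWithin_le_nhds
  have t2 : Filter.Tendsto (fun p : ℝ => Real.exp (-(ν * (s / p))))
      (nhdsWithin 0 (Set.Ioi 0)) (nhds 0) := by
    have ha : Filter.Tendsto (fun p : ℝ => ν * (s / p)) (nhdsWithin 0 (Set.Ioi 0)) Filter.atTop := by
      have hb := (tendsto_inv_nhdsGT_zero).const_mul_atTop (by positivity : (0:ℝ) < ν * s)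
      refine hb.congr (fun p => ?_)
      rw [div_eq_mul_inv]
      ring
    have := Real.tendsto_exp_atBot.comp (Filter.tendsto_neg_atTop_atBot.comp ha)
    exact this.congr (fun p => rfl)
  have part3 : Filter.Tendsto
      (fun p : ℝ =>
        ∫ x : ℝ, lapAbsMoment ν x ∂(ENNReal.ofReal (1 - p) • MeasureTheory.Measure.dirac 0 +
          ENNReal.ofReal p • MeasureTheory.Measure.dirac (s / p)))
      (nhdsWithin 0 (Set.Ioi 0)) (nhds (s + 1 / ν)) := by
    have hphi : Filter.Tendsto
        (fun p : ℝ => (1 - p) * (1 / ν) + (s + p * (1 / ν) * Real.exp (-(ν * (s / p)))))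
        (nhdsWithin 0 (Set.Ioi 0)) (nhds (1 / ν + (s + 0 * 0))) :=
      t1.add (tendsto_const_nhds.add (t3.mul t2))
    have hval : (1 / ν + (s + 0 * 0) : ℝ) = s + 1 / ν := by ring
    rw [hval] at hphi
    refine Filter.Tendsto.congr' ?_ hphi
    filter_upwards [hmemIoo] with p hp
    exact (hFeq p hp).symm
  -- membership of the mixtures
  have hmemS : ∀ p ∈ Ioo (0:ℝ) 1,
      (∫ x : ℝ, lapAbsMoment ν x ∂(ENNReal.ofReal (1 - p) • MeasureTheory.Measure.dirac (0:ℝ) +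
        ENNReal.ofReal p • MeasureTheory.Measure.dirac (s / p))) ∈ S := by
    intro p hp
    refine ⟨_, hμprob p hp, ?_, rfl⟩
    rw [hcomp (fun x => |x|) continuous_abs p hp]
    rw [abs_of_nonneg (div_nonneg hs.le hp.1.le), abs_zero, mul_zero, zero_add]
    rw [show p * (s / p) = s by field_simp [hp.1.ne']]
  have hbdd : BddAbove S := ⟨s + 1 / ν, hub⟩
  have hle : sSup S ≤ s + 1 / ν := csSup_le hne hub
  have hge : s + 1 / ν ≤ sSup S := by
    refine le_of_tendsto part3 ?_
    filter_upwards [hmemIoo] with p hp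
    exact le_csSup hbdd (hmemS p hp)
  exact ⟨h1, le_antisymm hle hge, part3⟩
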